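/- Assume β ∈ [0,1] and M > 6. There exists a constant C > 0 (depending only on β and M) such that for all ω₁ > 1 one has C₂₁²³⁴[n⁰¹, n⁰¹, n⁰¹](ω₁) ≤ C · ω₁^{2β − 1/2 − M/2}. -/

import Mathlib

open MeasureTheory Real

noncomputable section

/-- Japanese bracket ⟨ω⟩ = (1 + ω²)^{1/2}. -/
def jb (ω : ℝ) : ℝ := Real.sqrt (1 + ω ^ 2)

/-- n⁰¹(ω) = ⟨ω⟩^{-M/2}. -/
def n01 (M : ℝ) (ω : ℝ) : ℝ := jb ω ^ (-(M / 2))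

/-- The operator C₂₁²³⁴, with ω₂ = ω₃ + ω₄ − ω₁. -/
def C21op (β : ℝ) (k l m : ℝ → ℝ) (ω₁ : ℝ) : ℝ :=
  64 * π ^ 3 * ω₁ ^ (β - 1/2) *
    ∫ ω₃ in (0:ℝ)..(ω₁ / 2), ∫ ω₄ in (ω₁ - ω₃)..ω₁,
      (ω₃ + ω₄ - ω₁) ^ (β + 1/2) * ω₃ ^ β * ω₄ ^ β *
        (k (ω₃ + ω₄ - ω₁) * l ω₃ * m ω₄)

/-- The operator C₂₂²³⁴, with ω₂ = ω₃ + ω₄ − ω₁. -/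
def C22op (β : ℝ) (k l m : ℝ → ℝ) (ω₁ : ℝ) : ℝ :=
  64 * π ^ 3 * ω₁ ^ (β - 1/2) *
    ∫ ω₃ in (ω₁ / 2)..ω₁, ∫ ω₄ in ω₃..ω₁,
      (ω₃ + ω₄ - ω₁) ^ (β + 1/2) * ω₃ ^ β * ω₄ ^ β *
        (k (ω₃ + ω₄ - ω₁) * l ω₃ * m ω₄)

/-- The operator C₃²³⁴, with ω₂ = ω₃ + ω₄ − ω₁. -/
def C3op (β : ℝ) (k l m : ℝ → ℝ) (ω₁ : ℝ) : ℝ :=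
  64 * π ^ 3 * ω₁ ^ (β - 1/2) *
    ∫ ω₃ in (0:ℝ)..ω₁, ∫ ω₄ in Set.Ioi ω₁,
      (ω₃ + ω₄ - ω₁) ^ β * ω₃ ^ (β + 1/2) * ω₄ ^ β *
        (k (ω₃ + ω₄ - ω₁) * l ω₃ * m ω₄)

/-- The operator C₁²³⁴, with ω₂ = ω₃ + ω₄ − ω₁. -/
def C1op (β : ℝ) (k l m : ℝ → ℝ) (ω₁ : ℝ) : ℝ :=
  64 * π ^ 3 * ω₁ ^ β *
    ∫ ω₃ in Set.Ioi ω₁, ∫ ω₄ in Set.Ioi ω₃,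
      (ω₃ + ω₄ - ω₁) ^ β * ω₃ ^ β * ω₄ ^ β *
        (k (ω₃ + ω₄ - ω₁) * l ω₃ * m ω₄)

/-- The full domain of integration {0 ≤ ω₃ ≤ ω₄, ω₃ + ω₄ ≥ ω₁} ⊂ ℝ². -/
def Dom (ω₁ : ℝ) : Set (ℝ × ℝ) := {p | 0 ≤ p.1 ∧ p.1 ≤ p.2 ∧ ω₁ ≤ p.1 + p.2}

/-- The cross-section factor min{√ω₁, √ω₂, √ω₃}, with ω₂ = ω₃ + ω₄ − ω₁,
where p = (ω₃, ω₄). -/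
def crossMin (ω₁ : ℝ) (p : ℝ × ℝ) : ℝ :=
  min (Real.sqrt ω₁) (min (Real.sqrt (p.1 + p.2 - ω₁)) (Real.sqrt p.1))

/-- The operator C^{j₁j₂j₃}[k,l,m](ω₁) where the factor is k(ω_{j₁}) l(ω_{j₂}) m(ω_{j₃}),
with ω₂ = ω₃ + ω₄ − ω₁ and p = (ω₃, ω₄); here the selection of frequencies is passed
as a function `sel : (ℝ × ℝ) → ℝ × ℝ × ℝ` giving (ω_{j₁}, ω_{j₂}, ω_{j₃}). -/
def Cfull (β : ℝ) (k l m : ℝ → ℝ) (sel : ℝ → ℝ × ℝ → ℝ × ℝ × ℝ) (ω₁ : ℝ) : ℝ :=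
  64 * π ^ 3 * ω₁ ^ (β - 1/2) *
    ∫ p in Dom ω₁,
      ((p.1 + p.2 - ω₁) * p.1 * p.2) ^ β * crossMin ω₁ p *
        (k (sel ω₁ p).1 * l (sel ω₁ p).2.1 * m (sel ω₁ p).2.2)

/-- C²³⁴[k,l,m](ω₁): integrand k(ω₂) l(ω₃) m(ω₄). -/
def C234 (β : ℝ) (k l m : ℝ → ℝ) : ℝ → ℝ :=
  Cfull β k l m (fun ω₁ p => (p.1 + p.2 - ω₁, p.1, p.2))

/-- C¹²⁴[k,l,m](ω₁): integrand k(ω₁) l(ω₂) m(ω₄). -/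
def C124 (β : ℝ) (k l m : ℝ → ℝ) : ℝ → ℝ :=
  Cfull β k l m (fun ω₁ p => (ω₁, p.1 + p.2 - ω₁, p.2))

/-- C¹³⁴[k,l,m](ω₁): integrand k(ω₁) l(ω₃) m(ω₄). -/
def C134 (β : ℝ) (k l m : ℝ → ℝ) : ℝ → ℝ :=
  Cfull β k l m (fun ω₁ p => (ω₁, p.1, p.2))

/-- C¹²³[k,l,m](ω₁): integrand k(ω₁) l(ω₂) m(ω₃). -/
def C123 (β : ℝ) (k l m : ℝ → ℝ) : ℝ → ℝ :=
  Cfull β k l m (fun ω₁ p => (ω₁, p.1 + p.2 - ω₁, p.1))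

/-!
On the domain of `C21op` one has `ω₁/2 ≤ ω₄ ≤ ω₁`, so `ω₄^β n⁰¹(ω₄) ≲ ω₁^(β - M/2)`. Since
`β + 1/2 + 3/2 ≤ M/2`, the two remaining weights `ω₂^(β+1/2) n⁰¹(ω₂)` and `ω₃^β n⁰¹(ω₃)` are
`≲ (1 + ω)^(-3/2)`, and `ω₂ = ω₄ - (ω₁ - ω₃)` is the inner variable shifted to start at `0`.
Each of the two iterated integrals is therefore at most `∫₀^∞ (1 + u)^(-3/2) du = 2`.
-/
open Set Interval

lemma integral_one_add_sub_rpow_neg_le {a b s : ℝ} (hab : a ≤ b) (hs : 1 < s) :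
    ∫ u in a..b, (1 + (u - a)) ^ (-s) ≤ (s - 1)⁻¹ := by
  have hshift : (fun u : ℝ => (1 + (u - a)) ^ (-s)) = fun u => (u - (a - 1)) ^ (-s) := by
    funext u; ring_nf
  have hb : (1 : ℝ) ≤ b - (a - 1) := by linarith
  have h0 : (0 : ℝ) ∉ [[1, b - (a - 1)]] := by
    rw [uIcc_of_le hb]; exact fun h => by linarith [h.1]
  rw [hshift, intervalIntegral.integral_comp_sub_right (· ^ (-s)), sub_sub_cancel,
    integral_rpow (Or.inr ⟨by linarith, h0⟩), one_rpow,
    show -s + 1 = -(s - 1) by ring, div_neg, ← neg_div, neg_sub, div_eq_mul_inv]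
  have hpos : 0 ≤ (b - (a - 1)) ^ (-(s - 1)) := rpow_nonneg (by linarith) _
  exact mul_le_of_le_one_left (inv_nonneg.2 (by linarith)) (by linarith)

lemma intervalIntegral_le_of_le_one_add_rpow_neg {φ : ℝ → ℝ} {a b c s : ℝ} (hab : a ≤ b)
    (hs : 1 < s) (hc : 0 ≤ c) (hφ₀ : ∀ u ∈ Ioc a b, 0 ≤ φ u)
    (hφ : ∀ u ∈ Ioc a b, φ u ≤ c * (1 + (u - a)) ^ (-s)) :
    ∫ u in a..b, φ u ≤ c * (s - 1)⁻¹ := by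
  have hcont : ContinuousOn (fun u : ℝ => c * (1 + (u - a)) ^ (-s)) (Icc a b) := by
    refine continuousOn_const.mul (ContinuousOn.rpow_const (by fun_prop) fun u hu => ?_)
    left; linarith [hu.1]
  calc ∫ u in a..b, φ u ≤ ∫ u in a..b, c * (1 + (u - a)) ^ (-s) := by
        rw [intervalIntegral.integral_of_le hab, intervalIntegral.integral_of_le hab]
        exact integral_mono_of_nonneg ((ae_restrict_mem measurableSet_Ioc).mono hφ₀)
          (hcont.integrableOn_Icc.mono_set Ioc_subset_Icc_self)
          ((ae_restrict_mem measurableSet_Ioc).mono hφ)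
    _ ≤ c * (s - 1)⁻¹ := by
        rw [intervalIntegral.integral_const_mul]
        exact mul_le_mul_of_nonneg_left (integral_one_add_sub_rpow_neg_le hab hs) hc

lemma le_jb (u : ℝ) : u ≤ jb u :=
  (le_abs_self u).trans (by rw [← sqrt_sq_eq_abs]; exact sqrt_le_sqrt (by linarith))

lemma one_add_div_two_le_jb (u : ℝ) : (1 + u) / 2 ≤ jb u :=
  le_sqrt_of_sq_le (by nlinarith [sq_nonneg (3 * u - 1)])

lemma n01_nonneg (M u : ℝ) : 0 ≤ n01 M u := rpow_nonneg (sqrt_nonneg _) _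

lemma n01_le_rpow_neg {M u x : ℝ} (hM : 0 ≤ M) (hx : 0 < x) (hxu : x ≤ jb u) :
    n01 M u ≤ x ^ (-(M / 2)) :=
  rpow_le_rpow_of_nonpos hx hxu (by linarith)

lemma div_rpow_neg {x y : ℝ} (hx : 0 ≤ x) (hy : 0 < y) (z : ℝ) :
    (x / y) ^ (-z) = y ^ z * x ^ (-z) := by
  rw [div_rpow hx hy.le, rpow_neg hy.le, div_inv_eq_mul, mul_comm]

lemma rpow_mul_n01_le_one_add_rpow_neg {M e s u : ℝ} (hM : 0 ≤ M) (he : 0 ≤ e)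
    (hes : e + s ≤ M / 2) (hu : 0 ≤ u) :
    u ^ e * n01 M u ≤ 2 ^ (M / 2) * (1 + u) ^ (-s) := by
  have h1u : 1 ≤ 1 + u := by linarith
  calc u ^ e * n01 M u ≤ (1 + u) ^ e * (2 ^ (M / 2) * (1 + u) ^ (-(M / 2))) := by
        gcongr
        · exact n01_nonneg M u
        · linarith
        · rw [← div_rpow_neg (by linarith) two_pos]
          exact n01_le_rpow_neg hM (by linarith) (one_add_div_two_le_jb u)
    _ = 2 ^ (M / 2) * (1 + u) ^ (e - M / 2) := by
        rw [sub_eq_add_neg, rpow_add (by linarith)]; ring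
    _ ≤ 2 ^ (M / 2) * (1 + u) ^ (-s) := by
        gcongr
        linarith

lemma rpow_mul_n01_le_of_half_le {M β ω ω₁ : ℝ} (hM : 0 ≤ M) (hβ : 0 ≤ β) (hω₁ : 0 < ω₁)
    (hlo : ω₁ / 2 ≤ ω) (hhi : ω ≤ ω₁) :
    ω ^ β * n01 M ω ≤ 2 ^ (M / 2) * ω₁ ^ (β - M / 2) := by
  calc ω ^ β * n01 M ω ≤ ω₁ ^ β * (2 ^ (M / 2) * ω₁ ^ (-(M / 2))) := by
        gcongr
        · exact n01_nonneg M ω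
        · linarith
        · rw [← div_rpow_neg hω₁.le two_pos]
          exact n01_le_rpow_neg hM (by linarith) (hlo.trans (le_jb ω))
    _ = 2 ^ (M / 2) * ω₁ ^ (β - M / 2) := by
        rw [sub_eq_add_neg, rpow_add hω₁]; ring

def c21Integrand (β : ℝ) (k l m : ℝ → ℝ) (ω₁ ω₃ ω₄ : ℝ) : ℝ :=
  (ω₃ + ω₄ - ω₁) ^ (β + 1/2) * ω₃ ^ β * ω₄ ^ β * (k (ω₃ + ω₄ - ω₁) * l ω₃ * m ω₄)

lemma C21op_eq (β : ℝ) (k l m : ℝ → ℝ) (ω₁ : ℝ) :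
    C21op β k l m ω₁ = 64 * π ^ 3 * ω₁ ^ (β - 1/2) *
      ∫ ω₃ in (0:ℝ)..(ω₁ / 2), ∫ ω₄ in (ω₁ - ω₃)..ω₁, c21Integrand β k l m ω₁ ω₃ ω₄ :=
  rfl

section Integrand

variable {β M ω₁ ω₃ ω₄ : ℝ}

lemma c21Integrand_n01_nonneg (h₃ : 0 ≤ ω₃) (h₄ : 0 ≤ ω₄) (h₂ : ω₁ ≤ ω₃ + ω₄) :
    0 ≤ c21Integrand β (n01 M) (n01 M) (n01 M) ω₁ ω₃ ω₄ := by
  have := n01_nonneg M (ω₃ + ω₄ - ω₁)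
  have := n01_nonneg M ω₃
  have := n01_nonneg M ω₄
  have : 0 ≤ ω₃ + ω₄ - ω₁ := by linarith
  unfold c21Integrand
  positivity

lemma c21Integrand_n01_le (hβ₀ : 0 ≤ β) (hβ₁ : β ≤ 1) (hM : 6 ≤ M) (hω₁ : 0 < ω₁)
    (h₃ : 0 ≤ ω₃) (h₃' : ω₃ ≤ ω₁ / 2) (h₄ : ω₁ - ω₃ ≤ ω₄) (h₄' : ω₄ ≤ ω₁) :
    c21Integrand β (n01 M) (n01 M) (n01 M) ω₁ ω₃ ω₄ ≤
      (2 ^ (3 * M / 2) * ω₁ ^ (β - M / 2) * (1 + ω₃) ^ (-(3 / 2 : ℝ))) *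
        (1 + (ω₄ - (ω₁ - ω₃))) ^ (-(3 / 2 : ℝ)) := by
  set ω₂ := ω₃ + ω₄ - ω₁
  have h₂ : 0 ≤ ω₂ := by linarith
  have hbound₂ : ω₂ ^ (β + 1/2) * n01 M ω₂ ≤ 2 ^ (M / 2) * (1 + ω₂) ^ (-(3 / 2 : ℝ)) :=
    rpow_mul_n01_le_one_add_rpow_neg (by linarith) (by linarith) (by linarith) h₂
  have hbound₃ : ω₃ ^ β * n01 M ω₃ ≤ 2 ^ (M / 2) * (1 + ω₃) ^ (-(3 / 2 : ℝ)) :=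
    rpow_mul_n01_le_one_add_rpow_neg (by linarith) hβ₀ (by linarith) h₃
  have hbound₄ : ω₄ ^ β * n01 M ω₄ ≤ 2 ^ (M / 2) * ω₁ ^ (β - M / 2) :=
    rpow_mul_n01_le_of_half_le (by linarith) hβ₀ hω₁ (by linarith) h₄'
  have := mul_nonneg (rpow_nonneg h₂ (β + 1/2)) (n01_nonneg M ω₂)
  have := mul_nonneg (rpow_nonneg h₃ β) (n01_nonneg M ω₃)
  have := mul_nonneg (rpow_nonneg (by linarith : 0 ≤ ω₄) β) (n01_nonneg M ω₄)
  calc c21Integrand β (n01 M) (n01 M) (n01 M) ω₁ ω₃ ω₄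
      = ω₂ ^ (β + 1/2) * n01 M ω₂ * (ω₃ ^ β * n01 M ω₃) * (ω₄ ^ β * n01 M ω₄) := by
        unfold c21Integrand; ring
    _ ≤ 2 ^ (M / 2) * (1 + ω₂) ^ (-(3 / 2 : ℝ)) * (2 ^ (M / 2) * (1 + ω₃) ^ (-(3 / 2 : ℝ))) *
          (2 ^ (M / 2) * ω₁ ^ (β - M / 2)) := by
        gcongr
    _ = _ := by
        rw [show ω₄ - (ω₁ - ω₃) = ω₂ by ring, show 3 * M / 2 = M / 2 + M / 2 + M / 2 by ring,
          rpow_add two_pos, rpow_add two_pos]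
        ring

lemma integral_c21Integrand_n01_le (hβ₀ : 0 ≤ β) (hβ₁ : β ≤ 1) (hM : 6 ≤ M) (hω₁ : 0 < ω₁)
    (h₃ : 0 ≤ ω₃) (h₃' : ω₃ ≤ ω₁ / 2) :
    ∫ ω₄ in (ω₁ - ω₃)..ω₁, c21Integrand β (n01 M) (n01 M) (n01 M) ω₁ ω₃ ω₄ ≤
      2 * (2 ^ (3 * M / 2) * ω₁ ^ (β - M / 2)) * (1 + ω₃) ^ (-(3 / 2 : ℝ)) := by
  have hbound := intervalIntegral_le_of_le_one_add_rpow_neg (by linarith)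
    (by norm_num : (1 : ℝ) < 3 / 2) (by positivity)
    (fun ω₄ h => c21Integrand_n01_nonneg h₃ (by linarith [h.1]) (by linarith [h.1]))
    (fun ω₄ h => c21Integrand_n01_le hβ₀ hβ₁ hM hω₁ h₃ h₃' h.1.le h.2)
  exact hbound.trans_eq (by norm_num; ring)

end Integrand

/-- Upper bound: C₂₁²³⁴[n⁰¹,n⁰¹,n⁰¹](ω₁) ≲ ω₁^{2β − 1/2 − M/2} for ω₁ > 1. -/
theorem C21_upper_bound (β M : ℝ) (hβ0 : 0 ≤ β) (hβ1 : β ≤ 1) (hM : 6 < M) :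
    ∃ C : ℝ, 0 < C ∧ ∀ ω₁ : ℝ, 1 < ω₁ →
      C21op β (n01 M) (n01 M) (n01 M) ω₁ ≤ C * ω₁ ^ (2 * β - 1/2 - M / 2) := by
  refine ⟨256 * π ^ 3 * 2 ^ (3 * M / 2), by positivity, fun ω₁ hω₁ => ?_⟩
  have hω₁₀ : 0 < ω₁ := by linarith
  set K := 2 ^ (3 * M / 2) * ω₁ ^ (β - M / 2) with hK
  have houter : ∫ ω₃ in (0:ℝ)..(ω₁ / 2), ∫ ω₄ in (ω₁ - ω₃)..ω₁,
      c21Integrand β (n01 M) (n01 M) (n01 M) ω₁ ω₃ ω₄ ≤ 2 * K * (3 / 2 - 1)⁻¹ :=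
    intervalIntegral_le_of_le_one_add_rpow_neg (by linarith) (by norm_num) (by positivity)
      (fun ω₃ h => intervalIntegral.integral_nonneg (by linarith [h.1])
        fun ω₄ h' => c21Integrand_n01_nonneg h.1.le (by linarith [h.2, h'.1]) (by linarith [h'.1]))
      (fun ω₃ h => (integral_c21Integrand_n01_le hβ0 hβ1 hM.le hω₁₀ h.1.le h.2).trans_eq
        (by rw [sub_zero]))
  calc C21op β (n01 M) (n01 M) (n01 M) ω₁
      ≤ 64 * π ^ 3 * ω₁ ^ (β - 1/2) * (2 * K * (3 / 2 - 1)⁻¹) := by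
        rw [C21op_eq]; gcongr
    _ = 256 * π ^ 3 * 2 ^ (3 * M / 2) * ω₁ ^ (2 * β - 1/2 - M / 2) := by
        rw [hK, show 2 * β - 1/2 - M / 2 = (β - 1/2) + (β - M / 2) by ring, rpow_add hω₁₀]
        norm_num; ring
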